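/- arXiv:2405.07668 — 6 statements merged into one kernel-verified Lean document; each statement's English description precedes it below -/
import Mathlib

section
/- Core of Lemma 3.3 (recovery certification of PatchCleanser with revised prediction): fix finite index types ι and κ, a label type Y, a base classifier h : Matrix ι κ ℝ → Y, a set M of binary masks, and a set ℙ of binary patch regions such that every p ∈ ℙ is covered by some m ∈ M. Suppose the image x satisfies the two-masking agreement condition with label y: for all m₀, m₁ ∈ M, h applied to the double-masked mutant of x with entries (1 − m₀ i j) * (1 − m₁ i j) * x i j equals y. Then for every p ∈ ℙ and every p-malicious version x' of x, there exists m₀ ∈ M covering p such that for all m₁ ∈ M, h applied to the double-masked mutant of x' with entries (1 − m₁ i j) * (1 − m₀ i j) * x' i j equals y. -/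
/-- A binary matrix: all entries are 0 or 1. -/
def IsBinary {ι κ : Type*} (a : Matrix ι κ ℝ) : Prop :=
  ∀ i j, a i j = 0 ∨ a i j = 1

/-- The mask `m` covers the patch region `p`. -/
def Covers {ι κ : Type*} (m p : Matrix ι κ ℝ) : Prop :=
  ∀ i j, p i j = 1 → m i j = 1

/-- `x'` is a `p`-malicious version of `x`. -/
def MaliciousVersion {ι κ : Type*} (p x x' : Matrix ι κ ℝ) : Prop :=
  ∀ i j, p i j = 0 → x' i j = x i j

theorem Covers.one_sub_mul_eq_of_maliciousVersion {ι κ : Type*} {m p x x' : Matrix ι κ ℝ}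
    (hcov : Covers m p) (hp : IsBinary p) (hx' : MaliciousVersion p x x') (i : ι) (j : κ) :
    (1 - m i j) * x' i j = (1 - m i j) * x i j := by
  rcases hp i j with hp0 | hp1
  · rw [hx' i j hp0]
  · simp [hcov i j hp1]

theorem patchcleanser_revised_recovery_general {ι κ : Type*} {Y : Type*}
    (h : Matrix ι κ ℝ → Y)
    (M : Set (Matrix ι κ ℝ))
    (P : Set (Matrix ι κ ℝ)) (hP : ∀ p ∈ P, IsBinary p)
    (hcover : ∀ p ∈ P, ∃ m ∈ M, Covers m p)
    (x : Matrix ι κ ℝ) (y : Y)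
    (hTMA : ∀ m₀ ∈ M, ∀ m₁ ∈ M,
      h (fun i j => (1 - m₀ i j) * (1 - m₁ i j) * x i j) = y) :
    ∀ p ∈ P, ∀ x' : Matrix ι κ ℝ, MaliciousVersion p x x' →
      ∃ m₀ ∈ M, Covers m₀ p ∧ ∀ m₁ ∈ M,
        h (fun i j => (1 - m₁ i j) * (1 - m₀ i j) * x' i j) = y := by
  intro p hp x' hx'
  obtain ⟨m₀, hm₀, hcov⟩ := hcover p hp
  refine ⟨m₀, hm₀, hcov, fun m₁ hm₁ => ?_⟩
  have hmasked := hcov.one_sub_mul_eq_of_maliciousVersion (hP p hp) hx'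
  calc h (fun i j => (1 - m₁ i j) * (1 - m₀ i j) * x' i j)
      = h (fun i j => (1 - m₀ i j) * (1 - m₁ i j) * x i j) := by
        congr 1
        funext i j
        rw [mul_assoc, hmasked i j]
        ring
    _ = y := hTMA m₀ hm₀ m₁ hm₁

/-- Core of Lemma 3.3: recovery certification of PatchCleanser with revised prediction. -/
theorem patchcleanser_revised_recovery {ι κ : Type*} [Fintype ι] [Fintype κ] {Y : Type*}
    (h : Matrix ι κ ℝ → Y)
    (M : Set (Matrix ι κ ℝ)) (hM : ∀ m ∈ M, IsBinary m)
    (P : Set (Matrix ι κ ℝ)) (hP : ∀ p ∈ P, IsBinary p)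
    (hcover : ∀ p ∈ P, ∃ m ∈ M, Covers m p)
    (x : Matrix ι κ ℝ) (y : Y)
    (hTMA : ∀ m₀ ∈ M, ∀ m₁ ∈ M,
      h (fun i j => (1 - m₀ i j) * (1 - m₁ i j) * x i j) = y) :
    ∀ p ∈ P, ∀ x' : Matrix ι κ ℝ, MaliciousVersion p x x' →
      ∃ m₀ ∈ M, Covers m₀ p ∧ ∀ m₁ ∈ M,
        h (fun i j => (1 - m₁ i j) * (1 - m₀ i j) * x' i j) = y :=
  patchcleanser_revised_recovery_general h M P hP hcover x y hTMA
end

section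
/- Necessary attack condition for masking-based recovery, first-round case (Case 2a of Lemma 3.4): fix finite index types ι and κ, a label type Y, a base classifier h : Matrix ι κ ℝ → Y, and a set M of binary masks. Let p be a binary patch region covered by some mask in M, and let x' be a p-malicious version of an image x. If there is a label y_d such that for all m ∈ M, h applied to the masked mutant of x' with entries (1 − m i j) * x' i j equals y_d, then there exists m₁ ∈ M covering p such that h applied to the masked mutant of x with entries (1 − m₁ i j) * x i j equals y_d. -/
def maskedMutant {ι κ : Type*} (m x : Matrix ι κ ℝ) : Matrix ι κ ℝ :=
  fun i j => (1 - m i j) * x i j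

theorem maskedMutant_eq_of_covers {ι κ : Type*} {m p x x' : Matrix ι κ ℝ} (hp : IsBinary p)
    (hmp : Covers m p) (hmal : MaliciousVersion p x x') :
    maskedMutant m x = maskedMutant m x' := by
  funext i j
  rcases hp i j with hp0 | hp1
  · simp only [maskedMutant, hmal i j hp0]
  · simp only [maskedMutant, hmp i j hp1, sub_self, zero_mul]

theorem nac_masking_first_round_general {ι κ : Type*} {Y : Type*}
    (h : Matrix ι κ ℝ → Y)
    (M : Set (Matrix ι κ ℝ))
    (p : Matrix ι κ ℝ) (hp : IsBinary p)
    (hcover : ∃ m ∈ M, Covers m p)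
    (x x' : Matrix ι κ ℝ) (hmal : MaliciousVersion p x x')
    (y_d : Y)
    (hagree : ∀ m ∈ M, h (fun i j => (1 - m i j) * x' i j) = y_d) :
    ∃ m₁ ∈ M, Covers m₁ p ∧ h (fun i j => (1 - m₁ i j) * x i j) = y_d := by
  obtain ⟨m, hmM, hmp⟩ := hcover
  refine ⟨m, hmM, hmp, ?_⟩
  rw [← hagree m hmM]
  exact congrArg h (maskedMutant_eq_of_covers hp hmp hmal)

/-- Necessary attack condition for masking-based recovery, first-round case
(Case 2a of Lemma 3.4). -/
theorem nac_masking_first_round {ι κ : Type*} [Fintype ι] [Fintype κ] {Y : Type*}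
    (h : Matrix ι κ ℝ → Y)
    (M : Set (Matrix ι κ ℝ)) (hM : ∀ m ∈ M, IsBinary m)
    (p : Matrix ι κ ℝ) (hp : IsBinary p)
    (hcover : ∃ m ∈ M, Covers m p)
    (x x' : Matrix ι κ ℝ) (hmal : MaliciousVersion p x x')
    (y_d : Y)
    (hagree : ∀ m ∈ M, h (fun i j => (1 - m i j) * x' i j) = y_d) :
    ∃ m₁ ∈ M, Covers m₁ p ∧ h (fun i j => (1 - m₁ i j) * x i j) = y_d :=
  nac_masking_first_round_general h M p hp hcover x x' hmal y_d hagree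
end

section
/- Necessary attack condition for masking-based recovery, second-round case (Case 2b of Lemma 3.4): fix finite index types ι and κ, a label type Y, a base classifier h : Matrix ι κ ℝ → Y, and a set M of binary masks. Let p be a binary patch region covered by some mask in M, and let x' be a p-malicious version of an image x. Let m ∈ M and suppose there is a label y_d such that for all m' ∈ M, h applied to the double-masked mutant of x' with entries (1 − m i j) * (1 − m' i j) * x' i j equals y_d. Then there exists m' ∈ M covering p such that h applied to the double-masked mutant of x with entries (1 − m i j) * (1 − m' i j) * x i j equals y_d. -/
theorem MaliciousVersion.one_sub_mul_eq_of_covers {ι κ : Type*} {p x x' m : Matrix ι κ ℝ}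
    (hp : IsBinary p) (hmal : MaliciousVersion p x x') (hcov : Covers m p) (i : ι) (j : κ) :
    (1 - m i j) * x' i j = (1 - m i j) * x i j := by
  rcases hp i j with hp0 | hp1
  · rw [hmal i j hp0]
  · rw [hcov i j hp1, sub_self, zero_mul, zero_mul]

theorem nac_masking_second_round_general {ι κ : Type*} {Y : Type*}
    (h : Matrix ι κ ℝ → Y)
    (M : Set (Matrix ι κ ℝ))
    (p : Matrix ι κ ℝ) (hp : IsBinary p)
    (hcover : ∃ m ∈ M, Covers m p)
    (x x' : Matrix ι κ ℝ) (hmal : MaliciousVersion p x x')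
    (m : Matrix ι κ ℝ)
    (y_d : Y)
    (hagree : ∀ m' ∈ M, h (fun i j => (1 - m i j) * (1 - m' i j) * x' i j) = y_d) :
    ∃ m' ∈ M, Covers m' p ∧
      h (fun i j => (1 - m i j) * (1 - m' i j) * x i j) = y_d := by
  obtain ⟨m', hm'M, hm'p⟩ := hcover
  refine ⟨m', hm'M, hm'p, ?_⟩
  rw [← hagree m' hm'M]
  congr 1
  funext i j
  rw [mul_assoc, mul_assoc, hmal.one_sub_mul_eq_of_covers hp hm'p]

/-- Necessary attack condition for masking-based recovery, second-round case
(Case 2b of Lemma 3.4). -/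
theorem nac_masking_second_round {ι κ : Type*} [Fintype ι] [Fintype κ] {Y : Type*}
    (h : Matrix ι κ ℝ → Y)
    (M : Set (Matrix ι κ ℝ)) (hM : ∀ m ∈ M, IsBinary m)
    (p : Matrix ι κ ℝ) (hp : IsBinary p)
    (hcover : ∃ m ∈ M, Covers m p)
    (x x' : Matrix ι κ ℝ) (hmal : MaliciousVersion p x x')
    (m : Matrix ι κ ℝ) (hm : m ∈ M)
    (y_d : Y)
    (hagree : ∀ m' ∈ M, h (fun i j => (1 - m i j) * (1 - m' i j) * x' i j) = y_d) :
    ∃ m' ∈ M, Covers m' p ∧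
      h (fun i j => (1 - m i j) * (1 - m' i j) * x i j) = y_d :=
  nac_masking_second_round_general h M p hp hcover x x' hmal m y_d hagree
end

section
/- Vote-set inclusions under a patch attack: fix finite index types ι and κ, a label type Y, a classifier f : Matrix ι κ ℝ → Y, a finite set B of binary ablation matrices, a binary patch region p, an image x, and a p-malicious version x' of x. Then for every label y: (i) {b ∈ B : b disjoint from p and f(ablated mutant of x under b) = y} ⊆ {b ∈ B : f(ablated mutant of x' under b) = y}, and (ii) {b ∈ B : f(ablated mutant of x' under b) = y} ⊆ {b ∈ B : b not disjoint from p} ∪ {b ∈ B : b disjoint from p and f(ablated mutant of x under b) = y}. -/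
/-- The ablation `b` is disjoint from the patch region `p`. -/
def DisjointFrom {ι κ : Type*} (b p : Matrix ι κ ℝ) : Prop :=
  ∀ i j, b i j * p i j = 0

theorem MaliciousVersion.ablate_eq_of_disjointFrom {ι κ : Type*} {p x x' : Matrix ι κ ℝ}
    (hmal : MaliciousVersion p x x') {b : Matrix ι κ ℝ} (hd : DisjointFrom b p) :
    (fun i j => x' i j * b i j) = (fun i j => x i j * b i j) := by
  funext i j
  rcases mul_eq_zero.mp (hd i j) with hb | hp
  · rw [hb, mul_zero, mul_zero]
  · rw [hmal i j hp]

theorem vote_set_inclusions_general {ι κ : Type*} {Y : Type*}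
    (f : Matrix ι κ ℝ → Y)
    (B : Set (Matrix ι κ ℝ))
    (p : Matrix ι κ ℝ)
    (x x' : Matrix ι κ ℝ) (hmal : MaliciousVersion p x x') :
    ∀ y : Y,
      ({b | b ∈ B ∧ DisjointFrom b p ∧ f (fun i j => x i j * b i j) = y} ⊆
        {b | b ∈ B ∧ f (fun i j => x' i j * b i j) = y}) ∧
      ({b | b ∈ B ∧ f (fun i j => x' i j * b i j) = y} ⊆
        {b | b ∈ B ∧ ¬ DisjointFrom b p} ∪
        {b | b ∈ B ∧ DisjointFrom b p ∧ f (fun i j => x i j * b i j) = y}) := by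
  intro y
  constructor
  · rintro b ⟨hbB, hd, hvote⟩
    exact ⟨hbB, hmal.ablate_eq_of_disjointFrom hd ▸ hvote⟩
  · rintro b ⟨hbB, hvote⟩
    by_cases hd : DisjointFrom b p
    · exact Or.inr ⟨hbB, hd, hmal.ablate_eq_of_disjointFrom hd ▸ hvote⟩
    · exact Or.inl ⟨hbB, hd⟩

/-- Vote-set inclusions under a patch attack. -/
theorem vote_set_inclusions {ι κ : Type*} [Fintype ι] [Fintype κ] {Y : Type*}
    (f : Matrix ι κ ℝ → Y)
    (B : Set (Matrix ι κ ℝ)) (hBfin : B.Finite) (hB : ∀ b ∈ B, IsBinary b)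
    (p : Matrix ι κ ℝ) (hp : IsBinary p)
    (x x' : Matrix ι κ ℝ) (hmal : MaliciousVersion p x x') :
    ∀ y : Y,
      ({b | b ∈ B ∧ DisjointFrom b p ∧ f (fun i j => x i j * b i j) = y} ⊆
        {b | b ∈ B ∧ f (fun i j => x' i j * b i j) = y}) ∧
      ({b | b ∈ B ∧ f (fun i j => x' i j * b i j) = y} ⊆
        {b | b ∈ B ∧ ¬ DisjointFrom b p} ∪
        {b | b ∈ B ∧ DisjointFrom b p ∧ f (fun i j => x i j * b i j) = y}) :=
  vote_set_inclusions_general f B p x x' hmal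
end

section
/- Necessary attack condition for voting-based recovery (Lemma 3.5): fix finite index types ι and κ, a label type Y, a classifier f : Matrix ι κ ℝ → Y, a finite set B of binary ablation matrices, a binary patch region p, an image x, and labels y_maj and y_a. If some p-malicious version x' of x satisfies |{b ∈ B : f(ablated mutant of x' under b) = y_a}| ≥ |{b ∈ B : f(ablated mutant of x' under b) = y_maj}|, then |{b ∈ B : b disjoint from p and f(ablated mutant of x under b) = y_a}| + |{b ∈ B : b not disjoint from p}| ≥ |{b ∈ B : b disjoint from p and f(ablated mutant of x under b) = y_maj}|. -/
theorem MaliciousVersion.ablate_eq {ι κ : Type*} {p x x' b : Matrix ι κ ℝ}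
    (hm : MaliciousVersion p x x') (hd : DisjointFrom b p) :
    (fun i j => x' i j * b i j) = (fun i j => x i j * b i j) := by
  funext i j
  rcases mul_eq_zero.mp (hd i j) with hb | hp
  · simp [hb]
  · rw [hm i j hp]

section Votes

variable {α Y : Type*} {B : Set α} {D : α → Prop} {g g' : α → Y}

theorem ncard_votes_of_agree_le (hB : B.Finite) (hg : ∀ b, D b → g b = g' b) (y : Y) :
    {b | b ∈ B ∧ D b ∧ g b = y}.ncard ≤ {b | b ∈ B ∧ g' b = y}.ncard :=
  Set.ncard_le_ncard (fun b ⟨hb, hd, hy⟩ => ⟨hb, hg b hd ▸ hy⟩) (hB.subset fun _ h => h.1)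

theorem ncard_votes_le_agree_add (hB : B.Finite) (hg : ∀ b, D b → g b = g' b) (y : Y) :
    {b | b ∈ B ∧ g' b = y}.ncard ≤
      {b | b ∈ B ∧ D b ∧ g b = y}.ncard + {b | b ∈ B ∧ ¬ D b}.ncard := by
  have hsub : {b | b ∈ B ∧ g' b = y} ⊆
      {b | b ∈ B ∧ D b ∧ g b = y} ∪ {b | b ∈ B ∧ ¬ D b} := by
    rintro b ⟨hb, hy⟩
    by_cases hd : D b
    · exact Or.inl ⟨hb, hd, (hg b hd).trans hy⟩
    · exact Or.inr ⟨hb, hd⟩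
  calc {b | b ∈ B ∧ g' b = y}.ncard
      ≤ ({b | b ∈ B ∧ D b ∧ g b = y} ∪ {b | b ∈ B ∧ ¬ D b}).ncard :=
        Set.ncard_le_ncard hsub (hB.subset fun _ h => h.elim (·.1) (·.1))
    _ ≤ _ := Set.ncard_union_le _ _

end Votes

theorem nac_voting_general {ι κ : Type*} {Y : Type*}
    (f : Matrix ι κ ℝ → Y)
    (B : Set (Matrix ι κ ℝ)) (hBfin : B.Finite)
    (p : Matrix ι κ ℝ)
    (x : Matrix ι κ ℝ) (y_maj y_a : Y)
    (hattack : ∃ x' : Matrix ι κ ℝ, MaliciousVersion p x x' ∧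
      {b | b ∈ B ∧ f (fun i j => x' i j * b i j) = y_a}.ncard ≥
        {b | b ∈ B ∧ f (fun i j => x' i j * b i j) = y_maj}.ncard) :
    {b | b ∈ B ∧ DisjointFrom b p ∧ f (fun i j => x i j * b i j) = y_a}.ncard +
      {b | b ∈ B ∧ ¬ DisjointFrom b p}.ncard ≥
      {b | b ∈ B ∧ DisjointFrom b p ∧ f (fun i j => x i j * b i j) = y_maj}.ncard := by
  obtain ⟨x', hm, hge⟩ := hattack
  have hagree : ∀ b, DisjointFrom b p →
      f (fun i j => x i j * b i j) = f (fun i j => x' i j * b i j) :=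
    fun b hd => by rw [hm.ablate_eq hd]
  exact (ncard_votes_of_agree_le hBfin hagree y_maj).trans <|
    hge.trans (ncard_votes_le_agree_add hBfin hagree y_a)

/-- Necessary attack condition for voting-based recovery (Lemma 3.5). -/
theorem nac_voting {ι κ : Type*} [Fintype ι] [Fintype κ] {Y : Type*}
    (f : Matrix ι κ ℝ → Y)
    (B : Set (Matrix ι κ ℝ)) (hBfin : B.Finite) (hB : ∀ b ∈ B, IsBinary b)
    (p : Matrix ι κ ℝ) (hp : IsBinary p)
    (x : Matrix ι κ ℝ) (y_maj y_a : Y)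
    (hattack : ∃ x' : Matrix ι κ ℝ, MaliciousVersion p x x' ∧
      {b | b ∈ B ∧ f (fun i j => x' i j * b i j) = y_a}.ncard ≥
        {b | b ∈ B ∧ f (fun i j => x' i j * b i j) = y_maj}.ncard) :
    {b | b ∈ B ∧ DisjointFrom b p ∧ f (fun i j => x i j * b i j) = y_a}.ncard +
      {b | b ∈ B ∧ ¬ DisjointFrom b p}.ncard ≥
      {b | b ∈ B ∧ DisjointFrom b p ∧ f (fun i j => x i j * b i j) = y_maj}.ncard :=
  nac_voting_general f B hBfin p x y_maj y_a hattack
end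

section
/- Masking-based detection certification: fix finite index types ι and κ, a label type Y, a base classifier h : Matrix ι κ ℝ → Y, and a set M of binary masks. Let x be an image such that for all m ∈ M, h applied to the masked mutant of x with entries (1 − m i j) * x i j equals h x. Let p be a binary patch region covered by some mask in M and let x' be a p-malicious version of x. If h x' ≠ h x, then there exists m ∈ M such that h applied to the masked mutant of x' with entries (1 − m i j) * x' i j differs from h x'. -/
/-- Where `m i j = 1` both entries are erased; elsewhere `p i j ≠ 1`, so `p i j = 0` and the
images already agree. -/
theorem maskedMutant_eq_of_maliciousVersion {ι κ : Type*} {m p x x' : Matrix ι κ ℝ}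
    (hp : IsBinary p) (hcov : Covers m p) (hmal : MaliciousVersion p x x') :
    maskedMutant m x' = maskedMutant m x := by
  funext i j
  by_cases hm : m i j = 1
  · simp only [maskedMutant, hm, sub_self, zero_mul]
  · have hp0 : p i j = 0 := (hp i j).resolve_right (mt (hcov i j) hm)
    simp only [maskedMutant, hmal i j hp0]

theorem masking_detection_certification_general {ι κ : Type*} {Y : Type*}
    (h : Matrix ι κ ℝ → Y)
    (M : Set (Matrix ι κ ℝ))
    (x : Matrix ι κ ℝ)
    (hconsistent : ∀ m ∈ M, h (fun i j => (1 - m i j) * x i j) = h x)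
    (p : Matrix ι κ ℝ) (hp : IsBinary p)
    (hcover : ∃ m ∈ M, Covers m p)
    (x' : Matrix ι κ ℝ) (hmal : MaliciousVersion p x x')
    (hharm : h x' ≠ h x) :
    ∃ m ∈ M, h (fun i j => (1 - m i j) * x' i j) ≠ h x' := by
  obtain ⟨m, hmM, hcov⟩ := hcover
  refine ⟨m, hmM, fun hfixed => hharm ?_⟩
  calc h x' = h (maskedMutant m x') := hfixed.symm
    _ = h (maskedMutant m x) := by rw [maskedMutant_eq_of_maliciousVersion hp hcov hmal]
    _ = h x := hconsistent m hmM

/-- Masking-based detection certification. -/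
theorem masking_detection_certification {ι κ : Type*} [Fintype ι] [Fintype κ] {Y : Type*}
    (h : Matrix ι κ ℝ → Y)
    (M : Set (Matrix ι κ ℝ)) (hM : ∀ m ∈ M, IsBinary m)
    (x : Matrix ι κ ℝ)
    (hconsistent : ∀ m ∈ M, h (fun i j => (1 - m i j) * x i j) = h x)
    (p : Matrix ι κ ℝ) (hp : IsBinary p)
    (hcover : ∃ m ∈ M, Covers m p)
    (x' : Matrix ι κ ℝ) (hmal : MaliciousVersion p x x')
    (hharm : h x' ≠ h x) :
    ∃ m ∈ M, h (fun i j => (1 - m i j) * x' i j) ≠ h x' :=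
  masking_detection_certification_general h M x hconsistent p hp hcover x' hmal hharm
end
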